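/- Let R be a finite reduced crystallographic root system with a fixed base S of simple roots, and let I ⊆ S be any subset. Writing C := S \ I, the following inequality holds: ∑_{α ∈ C} ∑_{β ∈ R⁺ \ R_I} ⟨β, α∨⟩ ≤ #C + #(R⁺ \ R_I). -/

import Mathlib

open scoped RealInnerProductSpace Classical

noncomputable section

/-- The crystallographic pairing `⟨β, α∨⟩ = 2(β,α)/(α,α)`. -/
def cpair {V : Type*} [NormedAddCommGroup V] [InnerProductSpace ℝ V] (β α : V) : ℝ :=
  2 * ⟪β, α⟫ / ⟪α, α⟫

/-- A finite reduced crystallographic root system `R` in a real inner product space,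
together with a fixed base `S` of simple roots. -/
structure RootSystemWithBase (V : Type*) [NormedAddCommGroup V] [InnerProductSpace ℝ V] where
  /-- The (finite) set of roots. -/
  R : Finset V
  /-- The base of simple roots. -/
  S : Finset V
  S_subset : S ⊆ R
  zero_not_mem : (0 : V) ∉ R
  /-- `R` is stable under the reflection associated to each root. -/
  reflect_mem : ∀ α ∈ R, ∀ β ∈ R, β - cpair β α • α ∈ R
  /-- The root system is crystallographic: all pairings are integers. -/
  crystallographic : ∀ α ∈ R, ∀ β ∈ R, ∃ n : ℤ, cpair β α = (n : ℝ)
  /-- The root system is reduced: the only multiples of a root that are roots are `±` itself. -/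
  reduced : ∀ α ∈ R, ∀ t : ℝ, t • α ∈ R → t = 1 ∨ t = -1
  /-- The simple roots are linearly independent. -/
  indep : LinearIndependent ℝ (fun s : S => (s : V))
  /-- Every root is a nonnegative or nonpositive integer combination of simple roots. -/
  base_expand : ∀ β ∈ R, β ∈ AddSubmonoid.closure (S : Set V) ∨
    -β ∈ AddSubmonoid.closure (S : Set V)

namespace RootSystemWithBase

variable {V : Type*} [NormedAddCommGroup V] [InnerProductSpace ℝ V]

/-- The positive roots `R⁺` determined by the base `S`. -/
def posRoots (P : RootSystemWithBase V) : Finset V :=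
  P.R.filter (fun β => β ∈ AddSubmonoid.closure (P.S : Set V))

/-- For `I ⊆ S`, the set `R_I` of roots lying in the `ℤ`-span of `I`. -/
def rootsIn (P : RootSystemWithBase V) (I : Finset V) : Finset V :=
  P.R.filter (fun β => β ∈ Submodule.span ℤ (I : Set V))

/-- The root system is irreducible: it is not the orthogonal direct sum of two nonempty
root subsystems (equivalently, its Dynkin diagram is connected). -/
def IsIrreducible (P : RootSystemWithBase V) : Prop :=
  ∀ R₁ R₂ : Finset V, R₁ ∪ R₂ = P.R → R₁.Nonempty → R₂.Nonempty →
    (∀ a ∈ R₁, ∀ b ∈ R₂, ⟪a, b⟫ = 0) → False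

end RootSystemWithBase

open RootSystemWithBase

/-!
For `α ∈ C`, write `∑_{β ∈ R⁺ \ R_I} ⟨β, α∨⟩ = ∑_{β ∈ R⁺} ⟨β, α∨⟩ - ∑_{γ ∈ R⁺_I} ⟨γ, α∨⟩`. The first
sum is `2`, because the reflection `s_α` permutes `R⁺ \ {α}` and negates `⟨·, α∨⟩`. Each
`γ ∈ R⁺_I` has `⟨γ, α∨⟩ = -k_γ ≤ 0`, and the unbroken `α`-string `γ + α, …, γ + k_γ α` lies in
`N_α := R⁺_{I ∪ {α}} \ R_I`. These strings are pairwise disjoint and miss `α ∈ N_α`, so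
`∑_γ k_γ ≤ #N_α - 1` and the inner sum is at most `1 + #N_α`. Finally the `N_α` for `α ∈ C` are
pairwise disjoint subsets of `R⁺ \ R_I`.
-/

open Finset

section cpair

variable {V : Type*} [NormedAddCommGroup V] [InnerProductSpace ℝ V]

def cpairLinear (α : V) : V →ₗ[ℝ] ℝ where
  toFun β := cpair β α
  map_add' x y := by simp only [cpair, inner_add_left]; ring
  map_smul' r x := by simp only [cpair, real_inner_smul_left, RingHom.id_apply, smul_eq_mul]; ring

lemma cpair_add_left (x y α : V) : cpair (x + y) α = cpair x α + cpair y α :=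
  (cpairLinear α).map_add x y

lemma cpair_sub_left (x y α : V) : cpair (x - y) α = cpair x α - cpair y α :=
  (cpairLinear α).map_sub x y

lemma cpair_smul_left (r : ℝ) (x α : V) : cpair (r • x) α = r * cpair x α :=
  (cpairLinear α).map_smul r x

lemma cpair_neg_right (x α : V) : cpair x (-α) = -cpair x α := by
  simp only [cpair, inner_neg_right, inner_neg_left, neg_neg]; ring

lemma cpair_self {α : V} (h : α ≠ 0) : cpair α α = 2 := by
  have : ⟪α, α⟫ ≠ 0 := inner_self_ne_zero.mpr h
  simp only [cpair]; field_simp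

lemma cpair_reflection_left (β : V) {α : V} (h : α ≠ 0) :
    cpair (β - cpair β α • α) α = -cpair β α := by
  rw [cpair_sub_left, cpair_smul_left, cpair_self h]; ring

lemma cpair_neg_iff {β α : V} (h : α ≠ 0) : cpair β α < 0 ↔ ⟪β, α⟫ < 0 := by
  have : 0 < ⟪α, α⟫ := real_inner_self_pos.mpr h
  simp only [cpair, div_neg_iff, this, not_lt_of_gt this, and_false, false_or, and_true]
  constructor <;> intro <;> linarith

lemma cpair_neg_comm {a b : V} (ha : a ≠ 0) (hb : b ≠ 0) : cpair b a < 0 ↔ cpair a b < 0 := by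
  rw [cpair_neg_iff ha, cpair_neg_iff hb, real_inner_comm]

lemma eq_neg_of_cpair_le_neg_two {a b : V} (hba : cpair b a ≤ -2) (hab : cpair a b ≤ -2) :
    b = -a := by
  have pos : ∀ x y : V, cpair y x ≤ -2 → 0 < ⟪x, x⟫ := fun x y h =>
    real_inner_self_pos.mpr fun hx => by simp [cpair, hx] at h; linarith
  have ha := pos a b hba
  have hb := pos b a hab
  rw [cpair, div_le_iff₀ ha] at hba
  rw [cpair, div_le_iff₀ hb] at hab
  have : ⟪a + b, a + b⟫ ≤ 0 := by rw [inner_add_add_self]; linarith [real_inner_comm a b]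
  exact eq_neg_of_add_eq_zero_right (real_inner_self_nonpos.mp this)

end cpair

namespace RootSystemWithBase

variable {V : Type*} [NormedAddCommGroup V] [InnerProductSpace ℝ V] (P : RootSystemWithBase V)
  {I : Finset V}

lemma ne_zero_of_mem {α : V} (h : α ∈ P.R) : α ≠ 0 := fun e => P.zero_not_mem (e ▸ h)

lemma neg_mem {α : V} (h : α ∈ P.R) : -α ∈ P.R := by
  simpa [cpair_self (P.ne_zero_of_mem h), two_smul] using P.reflect_mem α h α h

lemma cpair_le_neg_two {a b : V} (ha : a ∈ P.R) (hb : b ∈ P.R) (hneg : cpair b a < 0)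
    (hne : cpair b a ≠ -1) : cpair b a ≤ -2 := by
  obtain ⟨n, hn⟩ := P.crystallographic a ha b hb
  rw [hn] at hneg hne ⊢
  have : n < 0 := by exact_mod_cast hneg
  have : n ≠ -1 := by exact_mod_cast hne
  have : n ≤ -2 := by omega
  exact_mod_cast this

lemma add_mem_of_cpair_neg {a b : V} (ha : a ∈ P.R) (hb : b ∈ P.R) (hne : b ≠ -a)
    (hneg : cpair b a < 0) : b + a ∈ P.R := by
  by_cases hba : cpair b a = -1
  · simpa [hba] using P.reflect_mem a ha b hb
  by_cases hab : cpair a b = -1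
  · simpa [hab, add_comm] using P.reflect_mem b hb a ha
  have hneg' := (cpair_neg_comm (P.ne_zero_of_mem ha) (P.ne_zero_of_mem hb)).mp hneg
  exact absurd (eq_neg_of_cpair_le_neg_two (P.cpair_le_neg_two ha hb hneg hba)
    (P.cpair_le_neg_two hb ha hneg' hab)) hne

lemma add_nsmul_mem_of_two_mul_le {γ α : V} (hγ : γ ∈ P.R) (hα : α ∈ P.R) {k : ℕ}
    (hk : cpair γ α = -k) (hne : ∀ j : ℕ, γ + j • α ≠ -α) :
    ∀ j : ℕ, 2 * j ≤ k → γ + j • α ∈ P.R := by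
  intro j
  induction j with
  | zero => simpa using hγ
  | succ j ih =>
    intro hj
    have hpair : cpair (γ + j • α) α < 0 := by
      rw [cpair_add_left, ← Nat.cast_smul_eq_nsmul ℝ, cpair_smul_left,
        cpair_self (P.ne_zero_of_mem hα), hk]
      have : (2 * j : ℝ) < k := by exact_mod_cast (by omega : 2 * j < k)
      linarith
    simpa [succ_nsmul, add_assoc] using
      P.add_mem_of_cpair_neg hα (ih (by omega)) (hne j) hpair

/-- The `α`-string through `γ` is unbroken: reflection in `α` maps `γ + jα` to `γ + (k-j)α`,
so it suffices to climb the first half of the string. -/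
lemma add_nsmul_mem {γ α : V} (hγ : γ ∈ P.R) (hα : α ∈ P.R) {k : ℕ}
    (hk : cpair γ α = -k) (hne : ∀ j : ℕ, γ + j • α ≠ -α) {j : ℕ} (hj : j ≤ k) :
    γ + j • α ∈ P.R := by
  by_cases hjk : 2 * j ≤ k
  · exact P.add_nsmul_mem_of_two_mul_le hγ hα hk hne j hjk
  have hmem := P.add_nsmul_mem_of_two_mul_le hγ hα hk hne (k - j) (by omega)
  have hpair : cpair (γ + (k - j) • α) α = -k + 2 * (k - j : ℕ) := by
    rw [cpair_add_left, ← Nat.cast_smul_eq_nsmul ℝ, cpair_smul_left,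
      cpair_self (P.ne_zero_of_mem hα), hk]; ring
  have := P.reflect_mem α hα _ hmem
  rw [hpair] at this
  convert this using 1
  rw [← Nat.cast_smul_eq_nsmul ℝ, ← Nat.cast_smul_eq_nsmul ℝ, Nat.cast_sub hj]
  module

lemma linearIndepOn_simple : LinearIndepOn ℝ id (P.S : Set V) := P.indep

-- junk `0` for `t ∉ S`
def coord (t : V) : V →ₗ[ℝ] ℝ :=
  if h : t ∈ P.S then
    (Module.Basis.extend P.linearIndepOn_simple).coord
      ⟨t, P.linearIndepOn_simple.subset_extend (Set.subset_univ _) h⟩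
  else 0

lemma coord_simple {t u : V} (ht : t ∈ P.S) (hu : u ∈ P.S) :
    P.coord t u = if u = t then 1 else 0 := by
  have hb : Module.Basis.extend P.linearIndepOn_simple
      ⟨u, P.linearIndepOn_simple.subset_extend (Set.subset_univ _) hu⟩ = u :=
    Module.Basis.extend_apply_self _ _
  rw [coord, dif_pos ht]
  nth_rw 1 [← hb]
  rw [Module.Basis.coord_apply, Module.Basis.repr_self, Finsupp.single_apply]
  simp only [Subtype.mk.injEq, eq_comm]

lemma coord_self {t : V} (ht : t ∈ P.S) : P.coord t t = 1 := by
  simp [P.coord_simple ht ht]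

lemma coord_of_ne {t u : V} (ht : t ∈ P.S) (hu : u ∈ P.S) (h : t ≠ u) : P.coord t u = 0 := by
  simp [P.coord_simple ht hu, Ne.symm h]

lemma coord_eq_zero_of_mem_span {t : V} (ht : t ∈ P.S) {s : Set V} (hs : s ⊆ P.S) (hts : t ∉ s)
    {x : V} (hx : x ∈ Submodule.span ℝ s) : P.coord t x = 0 := by
  refine (Submodule.span_le (p := LinearMap.ker (P.coord t))).mpr (fun u hu => ?_) hx
  exact P.coord_of_ne ht (hs hu) fun e => hts (e ▸ hu)

lemma coord_nonneg {x : V} (hx : x ∈ AddSubmonoid.closure (P.S : Set V)) {t : V}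
    (ht : t ∈ P.S) : 0 ≤ P.coord t x := by
  induction hx using AddSubmonoid.closure_induction with
  | mem u hu => rw [P.coord_simple ht hu]; split_ifs <;> norm_num
  | zero => simp
  | add x y _ _ hx hy => rw [map_add]; exact add_nonneg hx hy

lemma mem_closure_of_coord_eq_zero (hI : I ⊆ P.S) {x : V}
    (hx : x ∈ AddSubmonoid.closure (P.S : Set V)) (h : ∀ t ∈ P.S, t ∉ I → P.coord t x = 0) :
    x ∈ AddSubmonoid.closure (I : Set V) := by
  obtain ⟨f, -, rfl⟩ := AddSubmonoid.mem_closure_finset.mp hx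
  have hf : ∀ t ∈ P.S, P.coord t (∑ u ∈ P.S, f u • u) = f t := fun t ht => by
    rw [map_sum, sum_eq_single t (fun u hu hne => by
      rw [map_nsmul, P.coord_of_ne ht hu hne.symm, smul_zero]) (absurd ht),
      map_nsmul, P.coord_self ht, nsmul_one]
  rw [← sum_subset hI fun t ht htI => by
    rw [show f t = 0 by exact_mod_cast (hf t ht).symm.trans (h t ht htI), zero_smul]]
  exact AddSubmonoid.sum_mem _ fun t ht =>
    AddSubmonoid.nsmul_mem _ (AddSubmonoid.subset_closure ht) _

lemma mem_posRoots {β : V} :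
    β ∈ P.posRoots ↔ β ∈ P.R ∧ β ∈ AddSubmonoid.closure (P.S : Set V) :=
  mem_filter

lemma simple_mem_posRoots {α : V} (hα : α ∈ P.S) : α ∈ P.posRoots :=
  P.mem_posRoots.mpr ⟨P.S_subset hα, AddSubmonoid.subset_closure hα⟩

lemma exists_coord_ne_zero {α β : V} (hα : α ∈ P.S) (hβ : β ∈ P.posRoots) (hne : β ≠ α) :
    ∃ t ∈ P.S, t ≠ α ∧ P.coord t β ≠ 0 := by
  obtain ⟨hβR, hβc⟩ := P.mem_posRoots.mp hβ
  by_contra! h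
  have hβα := P.mem_closure_of_coord_eq_zero (singleton_subset_iff.mpr hα) hβc
    fun t ht htα => h t ht (by simpa using htα)
  rw [coe_singleton, AddSubmonoid.mem_closure_singleton] at hβα
  obtain ⟨n, rfl⟩ := hβα
  rw [← Nat.cast_smul_eq_nsmul ℝ] at hβR hne
  rcases P.reduced α (P.S_subset hα) n hβR with h1 | h1
  · exact hne (by rw [h1, one_smul])
  · linarith [(Nat.cast_nonneg n : (0 : ℝ) ≤ n)]

lemma reflection_mem_posRoots_erase {α β : V} (hα : α ∈ P.S) (hβ : β ∈ P.posRoots.erase α) :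
    β - cpair β α • α ∈ P.posRoots.erase α := by
  obtain ⟨hne, hβ⟩ := mem_erase.mp hβ
  obtain ⟨t, ht, htα, hβt⟩ := P.exists_coord_ne_zero hα hβ hne
  have hβt : 0 < P.coord t β := lt_of_le_of_ne (P.coord_nonneg (P.mem_posRoots.mp hβ).2 ht) hβt.symm
  have hcoord : P.coord t (β - cpair β α • α) = P.coord t β := by
    rw [map_sub, map_smul, P.coord_of_ne ht hα htα, smul_zero, sub_zero]
  have hR := P.reflect_mem α (P.S_subset hα) β (P.mem_posRoots.mp hβ).1
  refine mem_erase.mpr ⟨fun h => ?_, P.mem_posRoots.mpr ⟨hR, ?_⟩⟩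
  · rw [h, P.coord_of_ne ht hα htα] at hcoord
    exact hβt.ne hcoord
  · refine (P.base_expand _ hR).resolve_right fun hneg => ?_
    have := P.coord_nonneg hneg ht
    rw [map_neg, hcoord] at this
    linarith

lemma sum_cpair_posRoots {α : V} (hα : α ∈ P.S) : ∑ β ∈ P.posRoots, cpair β α = 2 := by
  have hα0 := P.ne_zero_of_mem (P.S_subset hα)
  rw [← add_sum_erase _ _ (P.simple_mem_posRoots hα), cpair_self hα0, add_eq_left]
  refine sum_involution (fun β _ => β - cpair β α • α)
    (fun β _ => by rw [cpair_reflection_left β hα0, add_neg_cancel])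
    (fun β _ hβ h => hβ ?_) (fun β hβ => P.reflection_mem_posRoots_erase hα hβ)
    (fun β _ => by rw [cpair_reflection_left β hα0, neg_smul, sub_neg_eq_add, sub_add_cancel])
  simpa [hα0] using h

lemma cpair_simple_nonpos {α t : V} (hα : α ∈ P.S) (ht : t ∈ P.S) (hne : t ≠ α) :
    cpair t α ≤ 0 := by
  by_contra! hpos
  have hsub : t + -α ∈ P.R :=
    P.add_mem_of_cpair_neg (P.neg_mem (P.S_subset hα)) (P.S_subset ht) (by rwa [neg_neg])
      (by rw [cpair_neg_right]; linarith)
  rcases P.base_expand _ hsub with h | h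
  · have := P.coord_nonneg h hα
    rw [map_add, map_neg, P.coord_of_ne hα ht hne.symm, P.coord_self hα] at this
    linarith
  · have := P.coord_nonneg h ht
    rw [map_neg, map_add, map_neg, P.coord_self ht, P.coord_of_ne ht hα hne] at this
    linarith

lemma coord_eq_zero_of_mem_rootsIn (hI : I ⊆ P.S) {t : V} (ht : t ∈ P.S) (htI : t ∉ I)
    {x : V} (hx : x ∈ P.rootsIn I) : P.coord t x = 0 :=
  P.coord_eq_zero_of_mem_span ht (by exact_mod_cast hI) htI
    (Submodule.span_subset_span ℤ ℝ _ (mem_filter.mp hx).2)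

lemma mem_rootsIn_of_coord_eq_zero (hI : I ⊆ P.S) {β : V} (hβ : β ∈ P.posRoots)
    (h : ∀ t ∈ P.S, t ∉ I → P.coord t β = 0) : β ∈ P.rootsIn I :=
  mem_filter.mpr ⟨(P.mem_posRoots.mp hβ).1, AddSubmonoid.closure_le.mpr
    Submodule.subset_span (P.mem_closure_of_coord_eq_zero hI (P.mem_posRoots.mp hβ).2 h)⟩

lemma cpair_nonpos_of_mem_closure (hI : I ⊆ P.S) {α : V} (hα : α ∈ P.S) (hαI : α ∉ I) {x : V}
    (hx : x ∈ AddSubmonoid.closure (I : Set V)) : cpair x α ≤ 0 := by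
  induction hx using AddSubmonoid.closure_induction with
  | mem t ht => exact P.cpair_simple_nonpos hα (hI ht) fun h => hαI (h ▸ ht)
  | zero => simp [cpair]
  | add x y _ _ hx hy => rw [cpair_add_left]; linarith

lemma exists_nat_cpair_eq_neg {a b : V} (ha : a ∈ P.R) (hb : b ∈ P.R) (h : cpair b a ≤ 0) :
    ∃ n : ℕ, cpair b a = -n := by
  obtain ⟨n, hn⟩ := P.crystallographic a ha b hb
  obtain ⟨m, rfl⟩ := Int.exists_eq_neg_ofNat (show n ≤ 0 by exact_mod_cast hn ▸ h)
  exact ⟨m, by rw [hn]; push_cast; rfl⟩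

lemma exists_nat_cpair_eq_neg_of_mem_rootsIn (hI : I ⊆ P.S) {α : V} (hα : α ∈ P.S) (hαI : α ∉ I)
    {γ : V} (hγ : γ ∈ P.posRoots ∩ P.rootsIn I) : ∃ n : ℕ, cpair γ α = -n := by
  obtain ⟨hγpos, hγI⟩ := mem_inter.mp hγ
  obtain ⟨hγR, hγc⟩ := P.mem_posRoots.mp hγpos
  refine P.exists_nat_cpair_eq_neg (P.S_subset hα) hγR (P.cpair_nonpos_of_mem_closure hI hα hαI ?_)
  exact P.mem_closure_of_coord_eq_zero hI hγc fun t ht htI =>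
    P.coord_eq_zero_of_mem_rootsIn hI ht htI hγI

lemma coord_add_nsmul_of_mem_rootsIn (hI : I ⊆ P.S) {α : V} (hα : α ∈ P.S) (hαI : α ∉ I)
    {γ : V} (hγ : γ ∈ P.rootsIn I) (j : ℕ) : P.coord α (γ + j • α) = j := by
  rw [map_add, map_nsmul, P.coord_eq_zero_of_mem_rootsIn hI hα hαI hγ, P.coord_self hα,
    zero_add, nsmul_one]

/-- `R⁺_{I ∪ {α}} \ R_I`: the positive roots gained by adjoining `α` to `I`. -/
def posRootsNew (I : Finset V) (α : V) : Finset V :=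
  (P.posRoots \ P.rootsIn I).filter (· ∈ Submodule.span ℝ (insert α (I : Set V)))

lemma simple_mem_posRootsNew (hI : I ⊆ P.S) {α : V} (hα : α ∈ P.S) (hαI : α ∉ I) :
    α ∈ P.posRootsNew I α := by
  refine mem_filter.mpr ⟨mem_sdiff.mpr ⟨P.simple_mem_posRoots hα, fun h => ?_⟩,
    Submodule.subset_span (Set.mem_insert α _)⟩
  have := P.coord_eq_zero_of_mem_rootsIn hI hα hαI h
  rw [P.coord_self hα] at this
  exact one_ne_zero this

lemma add_nsmul_mem_posRootsNew_erase (hI : I ⊆ P.S) {α : V} (hα : α ∈ P.S) (hαI : α ∉ I)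
    {γ : V} (hγ : γ ∈ P.posRoots ∩ P.rootsIn I) {k : ℕ} (hk : cpair γ α = -k) {j : ℕ}
    (hj : j ∈ Icc 1 k) : γ + j • α ∈ (P.posRootsNew I α).erase α := by
  obtain ⟨hγpos, hγI⟩ := mem_inter.mp hγ
  obtain ⟨hγR, hγc⟩ := P.mem_posRoots.mp hγpos
  obtain ⟨hj1, hjk⟩ := mem_Icc.mp hj
  have hcoord := P.coord_add_nsmul_of_mem_rootsIn hI hα hαI hγI
  have hR : γ + j • α ∈ P.R := by
    refine P.add_nsmul_mem hγR (P.S_subset hα) hk (fun i h => ?_) hjk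
    have := hcoord i
    rw [h, map_neg, P.coord_self hα] at this
    linarith [(Nat.cast_nonneg i : (0 : ℝ) ≤ i)]
  refine mem_erase.mpr ⟨fun h => ?_, mem_filter.mpr ⟨mem_sdiff.mpr
    ⟨P.mem_posRoots.mpr ⟨hR, ?_⟩, fun h => ?_⟩, ?_⟩⟩
  · have hj : (j : ℝ) = 1 := by rw [← hcoord j, h, P.coord_self hα]
    obtain rfl : j = 1 := by exact_mod_cast hj
    exact P.ne_zero_of_mem hγR (by simpa using h)
  · exact add_mem hγc (AddSubmonoid.nsmul_mem _ (AddSubmonoid.subset_closure hα) j)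
  · have : (j : ℝ) = 0 := (hcoord j).symm.trans (P.coord_eq_zero_of_mem_rootsIn hI hα hαI h)
    exact (Nat.one_le_iff_ne_zero.mp hj1) (by exact_mod_cast this)
  · have hγspan := Submodule.span_subset_span ℤ ℝ _ (mem_filter.mp hγI).2
    exact add_mem (Submodule.span_mono (Set.subset_insert α _) hγspan)
      (Submodule.smul_of_tower_mem _ j (Submodule.subset_span (Set.mem_insert α _)))

lemma sum_neg_cpair_le_card_posRootsNew (hI : I ⊆ P.S) {α : V} (hα : α ∈ P.S) (hαI : α ∉ I) :
    ∑ γ ∈ P.posRoots ∩ P.rootsIn I, -cpair γ α ≤ (#(P.posRootsNew I α) : ℝ) - 1 := by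
  choose! k hk using fun γ (hγ : γ ∈ P.posRoots ∩ P.rootsIn I) =>
    P.exists_nat_cpair_eq_neg_of_mem_rootsIn hI hα hαI hγ
  have hstrings : ∑ γ ∈ P.posRoots ∩ P.rootsIn I, k γ ≤ #((P.posRootsNew I α).erase α) := by
    have := card_le_card_of_injOn (fun p : Σ _ : V, ℕ => p.1 + p.2 • α)
      (s := (P.posRoots ∩ P.rootsIn I).sigma fun γ => Icc 1 (k γ))
      (fun p hp => P.add_nsmul_mem_posRootsNew_erase hI hα hαI (mem_sigma.mp hp).1
        (hk _ (mem_sigma.mp hp).1) (mem_sigma.mp hp).2) ?_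
    · simpa using this
    rintro ⟨γ₁, j₁⟩ h₁ ⟨γ₂, j₂⟩ h₂ h
    have hcoord := congrArg (P.coord α) h
    rw [P.coord_add_nsmul_of_mem_rootsIn hI hα hαI (mem_inter.mp (mem_sigma.mp h₁).1).2,
      P.coord_add_nsmul_of_mem_rootsIn hI hα hαI (mem_inter.mp (mem_sigma.mp h₂).1).2] at hcoord
    obtain rfl : j₁ = j₂ := by exact_mod_cast hcoord
    obtain rfl : γ₁ = γ₂ := add_right_cancel h
    rfl
  have hcard := card_erase_add_one (P.simple_mem_posRootsNew hI hα hαI)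
  have : ∑ γ ∈ P.posRoots ∩ P.rootsIn I, (k γ : ℝ) + 1 ≤ #(P.posRootsNew I α) := by
    exact_mod_cast hcard ▸ Nat.add_le_add_right hstrings 1
  rw [sum_congr rfl fun γ hγ => by rw [hk γ hγ, neg_neg]]
  linarith

lemma sum_cpair_sdiff_rootsIn_le (hI : I ⊆ P.S) {α : V} (hα : α ∈ P.S \ I) :
    ∑ β ∈ P.posRoots \ P.rootsIn I, cpair β α ≤ 1 + #(P.posRootsNew I α) := by
  obtain ⟨hαS, hαI⟩ := mem_sdiff.mp hα
  have hsplit := sum_sdiff (s₁ := P.posRoots ∩ P.rootsIn I) (s₂ := P.posRoots)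
    (f := fun β => cpair β α) inter_subset_left
  rw [sdiff_inter_self_left, P.sum_cpair_posRoots hαS] at hsplit
  have := P.sum_neg_cpair_le_card_posRootsNew hI hαS hαI
  rw [sum_neg_distrib] at this
  linarith

/-- A root in both spans has no coordinates outside `I`, so it lies in `R_I`. -/
lemma disjoint_posRootsNew (hI : I ⊆ P.S) {α α' : V} (hα : α ∈ P.S \ I) (hα' : α' ∈ P.S \ I)
    (hne : α ≠ α') : Disjoint (P.posRootsNew I α) (P.posRootsNew I α') := by
  rw [disjoint_left]
  intro β h h'
  obtain ⟨hβ, hβspan⟩ := mem_filter.mp h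
  obtain ⟨hβpos, hβI⟩ := mem_sdiff.mp hβ
  have hins : ∀ α ∈ P.S \ I, insert α (I : Set V) ⊆ P.S := fun α hα =>
    Set.insert_subset (mem_sdiff.mp hα).1 (by exact_mod_cast hI)
  refine hβI (P.mem_rootsIn_of_coord_eq_zero hI hβpos fun t ht htI => ?_)
  by_cases htα : t = α
  · subst htα
    exact P.coord_eq_zero_of_mem_span ht (hins α' hα') (by simp [hne, htI])
      (mem_filter.mp h').2
  · exact P.coord_eq_zero_of_mem_span ht (hins α hα) (by simp [htα, htI]) hβspan

lemma sum_card_posRootsNew_le (hI : I ⊆ P.S) :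
    ∑ α ∈ P.S \ I, #(P.posRootsNew I α) ≤ #(P.posRoots \ P.rootsIn I) := by
  rw [← card_biUnion fun α hα α' hα' hne => P.disjoint_posRootsNew hI hα hα' hne]
  exact card_le_card (biUnion_subset.mpr fun α _ => filter_subset _ _)

end RootSystemWithBase

/-- For a finite reduced crystallographic root system with base `S` and any
`I ⊆ S`, with `C := S \ I`:
`∑_{α ∈ C} ∑_{β ∈ R⁺ \ R_I} ⟨β, α∨⟩ ≤ #C + #(R⁺ \ R_I)`. -/
theorem root_inequality {V : Type*} [NormedAddCommGroup V] [InnerProductSpace ℝ V]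
    (P : RootSystemWithBase V) (I : Finset V) (hI : I ⊆ P.S) :
    ∑ α ∈ P.S \ I, ∑ β ∈ P.posRoots \ P.rootsIn I, cpair β α
      ≤ ((P.S \ I).card : ℝ) + ((P.posRoots \ P.rootsIn I).card : ℝ) := by
  calc ∑ α ∈ P.S \ I, ∑ β ∈ P.posRoots \ P.rootsIn I, cpair β α
      ≤ ∑ α ∈ P.S \ I, (1 + (#(P.posRootsNew I α) : ℝ)) :=
        sum_le_sum fun α hα => P.sum_cpair_sdiff_rootsIn_le hI hα
    _ = #(P.S \ I) + ∑ α ∈ P.S \ I, (#(P.posRootsNew I α) : ℝ) := by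
        rw [sum_add_distrib, sum_const, nsmul_one]
    _ ≤ #(P.S \ I) + #(P.posRoots \ P.rootsIn I) := by
        gcongr
        exact_mod_cast P.sum_card_posRootsNew_le hI
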